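/- arXiv:2301.11160 — 2 statements merged into one kernel-verified Lean document; each statement's English description precedes it below -/
import Mathlib

section
/- Let L ⊂ ℂ × ℝ be a uniformly discrete subset (there exists ε > 0 such that any two distinct points of L, viewed in ℝ³ ≅ ℂ × ℝ, are at Euclidean distance at least ε). Then there exists a constant C > 0 depending only on L such that for every integer k ≥ 6, ∑_{(α,β)∈L} (k/2π)^k / ((k/2π + |α|²/2)² + β²)^{k/2} ≤ C·√k. -/
/-!
Put `a = k / 2π`. Dividing numerator and denominator by `a ^ k` and applying Bernoulli's
inequality with exponent `k / 4` bounds the term at `(α, β)` by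
`8 w(|Re α| / 2) w(|Im α| / 2) w(π |β| / √k)`, where `w t = (1 + t)⁻²`, so that
`decay e x = w (e |x|)`.
Uniform discreteness makes the map sending a point to its cube in the grid of side `ε / 2`
injective on `L`, so the sum over `L` is dominated by a product of three sums over `ℤ`.
By telescoping, `∑ₙ w(e |n|) ≤ 1 + 2 / e`, which is `O(1)` in the two `α`-directions and
`O(√k)` in the `β`-direction.
-/

open Real Set

noncomputable def decay (e x : ℝ) : ℝ := 1 / (1 + e * |x|) ^ 2

lemma decay_nonneg (e x : ℝ) : 0 ≤ decay e x := by
  unfold decay; positivity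

lemma decay_le_mul_sub {e : ℝ} (he : 0 < e) {x : ℝ} (hx : 0 ≤ x) :
    decay e x ≤ (1 + 1 / e) * (1 / (1 + e * x) - 1 / (1 + e * (x + 1))) := by
  have h₀ : 0 < 1 + e * x := by positivity
  have h₁ : 0 < 1 + e * (x + 1) := by positivity
  rw [decay, abs_of_nonneg hx, div_sub_div _ _ h₀.ne' h₁.ne', div_le_iff₀ (by positivity)]
  field_simp
  nlinarith [mul_nonneg (mul_nonneg (mul_nonneg he.le he.le) he.le) hx]

lemma summable_decay_nat_and_tsum_le {e : ℝ} (he : 0 < e) :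
    Summable (fun n : ℕ => decay e n) ∧ ∑' n : ℕ, decay e n ≤ 1 + 1 / e := by
  have hpartial : ∀ N, ∑ n ∈ Finset.range N, decay e n ≤ 1 + 1 / e := by
    intro N
    set g : ℕ → ℝ := fun n => 1 / (1 + e * n)
    calc ∑ n ∈ Finset.range N, decay e n
        ≤ ∑ n ∈ Finset.range N, (1 + 1 / e) * (g n - g (n + 1)) :=
          Finset.sum_le_sum fun n _ => by
            simpa [g] using decay_le_mul_sub he (Nat.cast_nonneg n)
      _ = (1 + 1 / e) * (1 - g N) := by
          rw [← Finset.mul_sum, Finset.sum_range_sub']; simp [g]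
      _ ≤ 1 + 1 / e := by
          have : 0 ≤ g N := by positivity
          nlinarith [show 0 < 1 + 1 / e by positivity]
  exact ⟨summable_of_sum_range_le (fun n => decay_nonneg _ _) hpartial,
    Real.tsum_le_of_sum_range_le (fun n => decay_nonneg _ _) hpartial⟩

lemma summable_decay_int_and_tsum_le {e : ℝ} (he : 0 < e) :
    Summable (fun n : ℤ => decay e n) ∧ ∑' n : ℤ, decay e n ≤ 1 + 2 / e := by
  obtain ⟨hs, hle⟩ := summable_decay_nat_and_tsum_le he
  have hneg : HasSum (fun n : ℕ => decay e ((-n : ℤ) : ℝ)) (∑' n : ℕ, decay e n) := by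
    simpa [decay] using hs.hasSum
  have hsum := hs.hasSum.of_nat_of_neg (f := fun n : ℤ => decay e n) hneg
  refine ⟨hsum.summable, ?_⟩
  rw [hsum.tsum_eq]
  have : decay e ((0 : ℤ) : ℝ) = 1 := by simp [decay]
  rw [this, show 2 / e = 2 * (1 / e) by ring]
  linarith

lemma abs_floor_le_abs_add_one {R : Type*} [Field R] [LinearOrder R] [IsStrictOrderedRing R]
    [FloorRing R] (z : R) : |(⌊z⌋ : R)| ≤ |z| + 1 := by
  have := Int.floor_le z
  have := Int.lt_floor_add_one z
  rw [abs_le]; constructor <;> cases abs_cases z <;> linarith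

lemma decay_le_mul_decay_floor_div {s : ℝ} (hs : 0 < s) {d : ℝ} (hd : 0 ≤ d) (u : ℝ) :
    decay d u ≤ (1 + d * s) ^ 2 * decay (d * s) ⌊u / s⌋ := by
  have hfl : s * |(⌊u / s⌋ : ℝ)| ≤ |u| + s := by
    have := abs_floor_le_abs_add_one (u / s)
    rw [abs_div, abs_of_pos hs] at this
    calc s * |(⌊u / s⌋ : ℝ)| ≤ s * (|u| / s + 1) := by gcongr
      _ = |u| + s := by field_simp
  have key : 1 + d * s * |(⌊u / s⌋ : ℝ)| ≤ (1 + d * s) * (1 + d * |u|) := by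
    nlinarith [mul_le_mul_of_nonneg_left hfl hd,
      mul_nonneg (mul_nonneg hd hs.le) (abs_nonneg u)]
  unfold decay
  rw [mul_one_div, div_le_div_iff₀ (by positivity) (by positivity), one_mul, ← mul_pow]
  gcongr

noncomputable def bergmanTerm (k : ℕ) (p : ℂ × ℝ) : ℝ :=
  ((k : ℝ) / (2 * π)) ^ k /
    ((((k : ℝ) / (2 * π) + ‖p.1‖ ^ 2 / 2) ^ 2 + p.2 ^ 2) ^ ((k : ℝ) / 2))

lemma bergmanTerm_nonneg (k : ℕ) (p : ℂ × ℝ) : 0 ≤ bergmanTerm k p := by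
  unfold bergmanTerm; positivity

lemma one_add_mul_sq_mul_le_rpow {u v q : ℝ} (hu : 0 ≤ u) (hv : 0 ≤ v) (hq : 1 ≤ q) :
    (1 + q * u) ^ 2 * (1 + q * v) ≤ ((1 + u) ^ 2 + v) ^ (2 * q) := by
  have hbu : 1 + q * u ≤ (1 + u) ^ q := one_add_mul_self_le_rpow_one_add (by linarith) hq
  have hbv : 1 + q * v ≤ (1 + v) ^ q := one_add_mul_self_le_rpow_one_add (by linarith) hq
  have hsq : (1 + u) ^ 2 * (1 + v) ≤ ((1 + u) ^ 2 + v) ^ 2 := by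
    have : 1 ≤ (1 + u) ^ 2 := by nlinarith
    nlinarith [mul_le_mul_of_nonneg_right this hv]
  calc (1 + q * u) ^ 2 * (1 + q * v) ≤ ((1 + u) ^ q) ^ 2 * (1 + v) ^ q := by
        gcongr
    _ = ((1 + u) ^ 2 * (1 + v)) ^ q := by
        rw [rpow_pow_comm (by positivity), mul_rpow (by positivity) (by positivity)]
    _ ≤ (((1 + u) ^ 2 + v) ^ 2) ^ q := by gcongr
    _ = ((1 + u) ^ 2 + v) ^ (2 * q) := by
        rw [← rpow_natCast, ← rpow_mul (by positivity)]; norm_num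

lemma bergmanTerm_le {k : ℕ} (hk : 4 ≤ k) (p : ℂ × ℝ) :
    bergmanTerm k p ≤ 1 / ((1 + π * ‖p.1‖ ^ 2 / 4) ^ 2 * (1 + π ^ 2 * p.2 ^ 2 / k)) := by
  have hk0 : (0 : ℝ) < k := by positivity
  set a : ℝ := k / (2 * π) with ha_def
  have ha : 0 < a := by positivity
  set u := ‖p.1‖ ^ 2 / (2 * a)
  set v := p.2 ^ 2 / a ^ 2
  have hsplit : (a + ‖p.1‖ ^ 2 / 2) ^ 2 + p.2 ^ 2 = a ^ 2 * ((1 + u) ^ 2 + v) := by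
    simp only [u, v]; field_simp
  have hpow : (a ^ 2) ^ ((k : ℝ) / 2) = a ^ k := by
    rw [← rpow_natCast a 2, ← rpow_mul ha.le, ← rpow_natCast a k]; congr 1; push_cast; ring
  have hqu : (k : ℝ) / 4 * u = π * ‖p.1‖ ^ 2 / 4 := by
    simp only [u, ha_def]; field_simp
  have hqv : (k : ℝ) / 4 * v = π ^ 2 * p.2 ^ 2 / k := by
    simp only [v, ha_def]; field_simp; ring
  have hbern := one_add_mul_sq_mul_le_rpow (by positivity : 0 ≤ u) (by positivity : 0 ≤ v)
    (by rw [le_div_iff₀ (by norm_num)]; exact_mod_cast hk : (1 : ℝ) ≤ k / 4)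
  rw [hqu, hqv, show 2 * ((k : ℝ) / 4) = k / 2 by ring] at hbern
  rw [bergmanTerm, hsplit, mul_rpow (by positivity) (by positivity), hpow,
    div_mul_cancel_left₀ (by positivity), ← one_div]
  exact one_div_le_one_div_of_le (by positivity) hbern

lemma bergmanTerm_le_decay {k : ℕ} (hk : 4 ≤ k) (p : ℂ × ℝ) :
    bergmanTerm k p ≤
      8 * (decay (1 / 2) p.1.re * decay (1 / 2) p.1.im * decay (π / √k) p.2) := by
  set A := 1 + 1 / 2 * |p.1.re|
  set B := 1 + 1 / 2 * |p.1.im|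
  set W := 1 + π / √k * |p.2|
  have hAB : (A * B) ^ 2 ≤ 4 * (1 + π * ‖p.1‖ ^ 2 / 4) ^ 2 := by
    have hn : ‖p.1‖ ^ 2 = |p.1.re| ^ 2 + |p.1.im| ^ 2 := by
      rw [Complex.sq_norm, Complex.normSq_apply, sq_abs, sq_abs]; ring
    have : A * B ≤ 2 * (1 + π * ‖p.1‖ ^ 2 / 4) := by
      have hπ : |p.1.re| ^ 2 + |p.1.im| ^ 2 ≤ π * (|p.1.re| ^ 2 + |p.1.im| ^ 2) :=
        le_mul_of_one_le_left (by positivity) (by linarith [pi_gt_three])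
      rw [hn]
      simp only [A, B]
      nlinarith [sq_nonneg (|p.1.re| - 1), sq_nonneg (|p.1.im| - 1),
        sq_nonneg (|p.1.re| - |p.1.im|)]
    nlinarith [show 0 ≤ A * B by positivity]
  have hW : W ^ 2 ≤ 2 * (1 + π ^ 2 * p.2 ^ 2 / k) := by
    have : (π / √k * |p.2|) ^ 2 = π ^ 2 * p.2 ^ 2 / k := by
      rw [mul_pow, div_pow, sq_sqrt (Nat.cast_nonneg k), sq_abs]; ring
    nlinarith [sq_nonneg (1 - π / √k * |p.2|)]
  calc bergmanTerm k p ≤ 1 / ((1 + π * ‖p.1‖ ^ 2 / 4) ^ 2 * (1 + π ^ 2 * p.2 ^ 2 / k)) :=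
        bergmanTerm_le hk p
    _ ≤ 1 / ((A * B) ^ 2 * W ^ 2 / 8) := by
        gcongr
        nlinarith [mul_le_mul hAB hW (by positivity) (by positivity)]
    _ = 8 * (decay (1 / 2) p.1.re * decay (1 / 2) p.1.im * decay (π / √k) p.2) := by
        simp only [decay, A, B, W]; field_simp

noncomputable def cell (s : ℝ) (p : ℂ × ℝ) : ℤ × ℤ × ℤ :=
  (⌊p.1.re / s⌋, ⌊p.1.im / s⌋, ⌊p.2 / s⌋)

lemma sq_sub_lt_sq_of_floor_div_eq {R : Type*} [Field R] [LinearOrder R] [IsStrictOrderedRing R]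
    [FloorRing R] {s u v : R} (hs : 0 < s) (h : ⌊u / s⌋ = ⌊v / s⌋) :
    (u - v) ^ 2 < s ^ 2 := by
  have := Int.abs_sub_lt_one_of_floor_eq_floor h
  rw [← sub_div, abs_div, abs_of_pos hs, div_lt_one hs] at this
  exact sq_lt_sq.mpr (by rwa [abs_of_pos hs])

lemma injOn_cell {L : Set (ℂ × ℝ)} {ε : ℝ} (hε : 0 < ε)
    (hsep : ∀ p ∈ L, ∀ q ∈ L, p ≠ q → ε ≤ √(‖p.1 - q.1‖ ^ 2 + (p.2 - q.2) ^ 2)) :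
    InjOn (cell (ε / 2)) L := by
  intro p hp q hq hpq
  by_contra hne
  simp only [cell, Prod.mk.injEq] at hpq
  obtain ⟨hre, him, hβ⟩ := hpq
  have hn : ‖p.1 - q.1‖ ^ 2 = (p.1.re - q.1.re) ^ 2 + (p.1.im - q.1.im) ^ 2 := by
    rw [Complex.sq_norm, Complex.normSq_apply, Complex.sub_re, Complex.sub_im]; ring
  have hlt : ‖p.1 - q.1‖ ^ 2 + (p.2 - q.2) ^ 2 < ε ^ 2 := by
    have hs := half_pos hε
    rw [hn]
    nlinarith [sq_sub_lt_sq_of_floor_div_eq hs hre, sq_sub_lt_sq_of_floor_div_eq hs him,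
      sq_sub_lt_sq_of_floor_div_eq hs hβ]
  exact (hsep p hp q hq hne).not_gt ((sqrt_lt' hε).mpr hlt)

lemma summable_and_tsum_le_of_injOn {X ι : Type*} {L : Set X} {Φ : X → ι} (hΦ : InjOn Φ L)
    {f : X → ℝ} {F : ι → ℝ} (hf : ∀ x ∈ L, 0 ≤ f x) (hF : ∀ i, 0 ≤ F i) (hFs : Summable F)
    (hfF : ∀ x ∈ L, f x ≤ F (Φ x)) :
    Summable (fun x : L => f x) ∧ ∑' x : L, f x ≤ ∑' i, F i := by
  have hs : Summable (fun x : L => f x) :=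
    Summable.of_nonneg_of_le (fun x => hf x x.2) (fun x => hfF x x.2)
      (hFs.comp_injective hΦ.injective)
  exact ⟨hs, hs.tsum_le_tsum_of_inj (fun x : L => Φ x) hΦ.injective (fun i _ => hF i)
    (fun x => hfF x x.2) hFs⟩

noncomputable def cellWeight (d e : ℝ) (i : ℤ × ℤ × ℤ) : ℝ :=
  decay d i.1 * (decay d i.2.1 * decay e i.2.2)

lemma cellWeight_nonneg (d e : ℝ) (i : ℤ × ℤ × ℤ) : 0 ≤ cellWeight d e i := by
  unfold cellWeight decay; positivity

lemma summable_cellWeight_and_tsum_le {d e : ℝ} (hd : 0 < d) (he : 0 < e) :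
    Summable (cellWeight d e) ∧ ∑' i, cellWeight d e i ≤ (1 + 2 / d) ^ 2 * (1 + 2 / e) := by
  obtain ⟨hsd, hled⟩ := summable_decay_int_and_tsum_le hd
  obtain ⟨hse, hlee⟩ := summable_decay_int_and_tsum_le he
  have h0 (c : ℝ) : 0 ≤ fun n : ℤ => decay c n := fun n => decay_nonneg _ _
  have hT (c : ℝ) : 0 ≤ ∑' n : ℤ, decay c n := tsum_nonneg fun n => decay_nonneg _ _
  have hin := hsd.mul_of_nonneg hse (h0 d) (h0 e)
  have hout := hsd.mul_of_nonneg hin (h0 d) fun _ =>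
    mul_nonneg (decay_nonneg _ _) (decay_nonneg _ _)
  refine ⟨hout, ?_⟩
  unfold cellWeight
  rw [← hsd.tsum_mul_tsum hin hout, ← hsd.tsum_mul_tsum hse hin]
  calc _ ≤ (1 + 2 / d) * ((1 + 2 / d) * (1 + 2 / e)) :=
        mul_le_mul hled (mul_le_mul hled hlee (hT e) (by positivity))
          (mul_nonneg (hT d) (hT e)) (by positivity)
    _ = _ := by ring

lemma summable_cellWeight_and_tsum_le_mul_sqrt {s : ℝ} (hs : 0 < s) {k : ℕ} (hk : 1 ≤ k) :
    Summable (cellWeight (s / 2) (π * s / √k)) ∧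
      ∑' i, cellWeight (s / 2) (π * s / √k) i ≤ (1 + 4 / s) ^ 2 * (1 + 2 / (π * s)) * √k := by
  have hsk : 1 ≤ √(k : ℝ) := one_le_sqrt.mpr (by exact_mod_cast hk)
  obtain ⟨hW, hle⟩ := summable_cellWeight_and_tsum_le (half_pos hs)
    (by positivity : 0 < π * s / √k)
  refine ⟨hW, hle.trans ?_⟩
  rw [show 2 / (s / 2) = 4 / s by ring, show 2 / (π * s / √k) = 2 / (π * s) * √k by field_simp,
    mul_assoc]
  gcongr
  nlinarith [show 0 ≤ 2 / (π * s) by positivity]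

lemma bergmanTerm_le_cellWeight {k : ℕ} (hk : 4 ≤ k) {s : ℝ} (hs : 0 < s) (p : ℂ × ℝ) :
    bergmanTerm k p ≤
      8 * (1 + s / 2) ^ 4 * (1 + π * s) ^ 2 * cellWeight (s / 2) (π * s / √k) (cell s p) := by
  have hsk : 1 ≤ √(k : ℝ) := one_le_sqrt.mpr (by exact_mod_cast (by omega : 1 ≤ k))
  have hre := decay_le_mul_decay_floor_div hs (by norm_num : (0 : ℝ) ≤ 1 / 2) p.1.re
  have him := decay_le_mul_decay_floor_div hs (by norm_num : (0 : ℝ) ≤ 1 / 2) p.1.im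
  have hβ := decay_le_mul_decay_floor_div hs (by positivity : 0 ≤ π / √k) p.2
  rw [show 1 / 2 * s = s / 2 by ring] at hre him
  rw [show π / √k * s = π * s / √k by ring] at hβ
  have hπs : π * s / √k ≤ π * s := div_le_self (by positivity) hsk
  replace hβ : decay (π / √k) p.2 ≤ (1 + π * s) ^ 2 * decay (π * s / √k) ⌊p.2 / s⌋ :=
    hβ.trans (mul_le_mul_of_nonneg_right (by gcongr) (decay_nonneg _ _))
  refine (bergmanTerm_le_decay hk p).trans ?_
  calc _ ≤ 8 * ((1 + s / 2) ^ 2 * decay (s / 2) ⌊p.1.re / s⌋ *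
        ((1 + s / 2) ^ 2 * decay (s / 2) ⌊p.1.im / s⌋) *
        ((1 + π * s) ^ 2 * decay (π * s / √k) ⌊p.2 / s⌋)) := by
          gcongr
          all_goals first | exact hβ | (simp only [decay]; positivity)
    _ = _ := by simp only [cellWeight, cell]; ring

/-- **Cusp-stabilizer contribution to the Bergman kernel**: if `L ⊂ ℂ × ℝ` is uniformly
discrete (for the Euclidean distance on `ℝ³ ≅ ℂ × ℝ`), then there is `C > 0` depending
only on `L` such that for every integer `k ≥ 6`,
`∑_{(α,β)∈L} (k/2π)^k / ((k/2π + |α|²/2)² + β²)^{k/2} ≤ C √k`. -/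
theorem heisenberg_lattice_sum_bound (L : Set (ℂ × ℝ))
    (hL : ∃ ε > 0, ∀ p ∈ L, ∀ q ∈ L, p ≠ q →
      ε ≤ Real.sqrt (‖p.1 - q.1‖ ^ 2 + (p.2 - q.2) ^ 2)) :
    ∃ C > 0, ∀ k : ℕ, 6 ≤ k →
      Summable (fun p : L => ((k : ℝ) / (2 * Real.pi)) ^ k /
        ((((k : ℝ) / (2 * Real.pi) + ‖(p : ℂ × ℝ).1‖ ^ 2 / 2) ^ 2 +
          (p : ℂ × ℝ).2 ^ 2) ^ ((k : ℝ) / 2))) ∧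
      ∑' p : L, ((k : ℝ) / (2 * Real.pi)) ^ k /
        ((((k : ℝ) / (2 * Real.pi) + ‖(p : ℂ × ℝ).1‖ ^ 2 / 2) ^ 2 +
          (p : ℂ × ℝ).2 ^ 2) ^ ((k : ℝ) / 2)) ≤ C * Real.sqrt k := by
  obtain ⟨ε, hε, hsep⟩ := hL
  set s := ε / 2
  have hs : 0 < s := half_pos hε
  refine ⟨8 * (1 + s / 2) ^ 4 * (1 + π * s) ^ 2 * ((1 + 4 / s) ^ 2 * (1 + 2 / (π * s))),
    by positivity, fun k hk => ?_⟩
  obtain ⟨hW, hWle⟩ := summable_cellWeight_and_tsum_le_mul_sqrt hs (by omega : 1 ≤ k)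
  obtain ⟨hsum, hle⟩ := summable_and_tsum_le_of_injOn (injOn_cell hε hsep)
    (fun p _ => bergmanTerm_nonneg k p)
    (fun i => mul_nonneg (by positivity) (cellWeight_nonneg _ _ i)) (hW.mul_left _)
    (fun p _ => bergmanTerm_le_cellWeight (by omega) hs p)
  refine ⟨hsum, hle.trans ?_⟩
  rw [tsum_mul_left, mul_assoc _ _ √(k : ℝ)]
  exact mul_le_mul_of_nonneg_left hWle (by positivity)
end

section
/- For every real k > 3 and every real A > 0, ∫_0^∞ ∫_{−∞}^{∞} ((A + r²/2)² + β²)^{−k/2} dβ dr = (π/√2) · Γ((k−1)/2)·Γ(k−3/2) / (Γ(k/2)·Γ(k−1)) · A^{3/2−k}, where Γ denotes the real Gamma function. -/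
/-!
Writing `Γ(s) c^{-s} = ∫₀^∞ t^{s-1} e^{-ct} dt` with `c = a + b x²` and integrating in `x` first,
the Gaussian integral gives `∫_ℝ (a + b x²)^{-s} dx = √(π/b) Γ(s - 1/2)/Γ(s) · a^{1/2-s}`.
Applied to the `β`-integral (`a = (A + r²/2)²`, `b = 1`, `s = k/2`) this leaves
`∫₀^∞ (A + r²/2)^{1-k} dr`, which is half of the same integral with `a = A`, `b = 1/2`, `s = k - 1`.
-/

open MeasureTheory Real Set

lemma integrableOn_rpow_sub_one_mul_exp_neg_mul {c r : ℝ} (hc : 0 < c) (hr : 0 < r) :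
    IntegrableOn (fun t : ℝ => t ^ (c - 1) * exp (-(r * t))) (Ioi 0) := by
  simpa only [rpow_one, neg_mul] using
    integrableOn_rpow_mul_exp_neg_mul_rpow (p := 1) (by linarith : -1 < c - 1) one_pos hr

section

variable {a b s : ℝ}

lemma integral_rpow_mul_exp_neg_mul_add_mul_sq {t : ℝ} (ht : 0 < t) :
    ∫ x : ℝ, t ^ (s - 1) * exp (-((a + b * x ^ 2) * t)) =
      √(π / b) * (t ^ (s - 1 / 2 - 1) * exp (-(a * t))) := by
  have hsplit : ∀ x : ℝ, t ^ (s - 1) * exp (-((a + b * x ^ 2) * t)) =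
      t ^ (s - 1) * exp (-(a * t)) * exp (-(b * t) * x ^ 2) := fun x => by
    rw [mul_assoc, ← exp_add]; ring_nf
  have hsqrt : √(π / (b * t)) = √(π / b) * t ^ (-(1 / 2) : ℝ) := by
    rw [← div_div, sqrt_div' _ ht.le, sqrt_eq_rpow t, rpow_neg ht.le, div_eq_mul_inv]
  simp_rw [hsplit, integral_const_mul, integral_gaussian, hsqrt,
    show s - 1 / 2 - 1 = (s - 1) + -(1 / 2) by ring, rpow_add ht]
  ring

lemma integrable_rpow_mul_exp_neg_mul_add_mul_sq (hb : 0 < b) {t : ℝ} (ht : 0 < t) :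
    Integrable fun x : ℝ => t ^ (s - 1) * exp (-((a + b * x ^ 2) * t)) := by
  refine ((integrable_exp_neg_mul_sq (mul_pos hb ht)).const_mul
    (t ^ (s - 1) * exp (-(a * t)))).congr (Filter.Eventually.of_forall fun x => ?_)
  simp only [mul_assoc, ← exp_add]; ring_nf

lemma integral_add_mul_sq_rpow_neg (ha : 0 < a) (hb : 0 < b) (hs : 1 / 2 < s) :
    ∫ x : ℝ, (a + b * x ^ 2) ^ (-s) =
      √(π / b) * (Gamma (s - 1 / 2) / Gamma s) * a ^ (1 / 2 - s) := by
  set F : ℝ → ℝ → ℝ := fun x t => t ^ (s - 1) * exp (-((a + b * x ^ 2) * t))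
  have hmeas : AEStronglyMeasurable (Function.uncurry F)
      (volume.prod (volume.restrict (Ioi 0))) :=
    (by fun_prop : Measurable (Function.uncurry F)).aestronglyMeasurable
  have hint : Integrable (Function.uncurry F) (volume.prod (volume.restrict (Ioi 0))) := by
    refine (integrable_prod_iff' hmeas).2 ⟨?_, ?_⟩
    · filter_upwards [ae_restrict_mem measurableSet_Ioi] with t ht
      exact integrable_rpow_mul_exp_neg_mul_add_mul_sq hb ht
    · refine ((integrableOn_rpow_sub_one_mul_exp_neg_mul
        (by linarith : 0 < s - 1 / 2) ha).const_mul √(π / b)).congr ?_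
      filter_upwards [ae_restrict_mem measurableSet_Ioi] with t (ht : 0 < t)
      rw [← integral_rpow_mul_exp_neg_mul_add_mul_sq ht]
      exact integral_congr_ae (Filter.Eventually.of_forall fun x =>
        (norm_of_nonneg (by positivity : 0 ≤ F x t)).symm)
  have hinner_t : ∀ x : ℝ, ∫ t in Ioi 0, F x t = (a + b * x ^ 2) ^ (-s) * Gamma s := fun x => by
    rw [integral_rpow_mul_exp_neg_mul_Ioi (by linarith) (by positivity), one_div,
      inv_rpow (by positivity), ← rpow_neg (by positivity)]
  have hinner_x : ∀ t ∈ Ioi (0 : ℝ),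
      ∫ x, F x t = √(π / b) * (t ^ (s - 1 / 2 - 1) * exp (-(a * t))) :=
    fun t ht => integral_rpow_mul_exp_neg_mul_add_mul_sq ht
  have hswap := integral_integral_swap hint
  simp_rw [hinner_t, integral_mul_const] at hswap
  rw [setIntegral_congr_fun measurableSet_Ioi hinner_x, integral_const_mul,
    integral_rpow_mul_exp_neg_mul_Ioi (by linarith) ha, one_div, inv_rpow ha.le,
    ← rpow_neg ha.le] at hswap
  have hΓ : Gamma s ≠ 0 := (Gamma_pos_of_pos (by linarith)).ne'
  rw [← mul_div_cancel_right₀ (∫ x : ℝ, (a + b * x ^ 2) ^ (-s)) hΓ, hswap,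
    show 1 / 2 - s = -(s - 1 / 2) by ring]
  ring

lemma integral_Ioi_add_mul_sq_rpow_neg (ha : 0 < a) (hb : 0 < b) (hs : 1 / 2 < s) :
    ∫ x in Ioi (0 : ℝ), (a + b * x ^ 2) ^ (-s) =
      √(π / b) / 2 * (Gamma (s - 1 / 2) / Gamma s) * a ^ (1 / 2 - s) := by
  have habs := integral_comp_abs (f := fun x => (a + b * x ^ 2) ^ (-s))
  simp only [sq_abs, integral_add_mul_sq_rpow_neg ha hb hs] at habs
  linarith

end

/-- **Evaluation of the cusp-comparison integral**: for real `k > 3` and `A > 0`,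
`∫_0^∞ ∫_{-∞}^∞ ((A + r²/2)² + β²)^{-k/2} dβ dr
  = (π/√2) Γ((k-1)/2) Γ(k-3/2) / (Γ(k/2) Γ(k-1)) · A^{3/2-k}`. -/
theorem integral_cusp_comparison (k : ℝ) (hk : 3 < k) (A : ℝ) (hA : 0 < A) :
    (∫ r in Set.Ioi (0 : ℝ), ∫ β : ℝ, ((A + r ^ 2 / 2) ^ 2 + β ^ 2) ^ (-(k / 2))) =
      Real.pi / Real.sqrt 2 *
        (Real.Gamma ((k - 1) / 2) * Real.Gamma (k - 3 / 2) /
          (Real.Gamma (k / 2) * Real.Gamma (k - 1))) *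
        A ^ (3 / 2 - k) := by
  have hinner : ∀ r : ℝ, ∫ β : ℝ, ((A + r ^ 2 / 2) ^ 2 + β ^ 2) ^ (-(k / 2)) =
      √π * (Gamma ((k - 1) / 2) / Gamma (k / 2)) * (A + r ^ 2 / 2) ^ (1 - k) := fun r => by
    have hc : 0 < A + r ^ 2 / 2 := by positivity
    have h := integral_add_mul_sq_rpow_neg (pow_pos hc 2) one_pos (by linarith : 1 / 2 < k / 2)
    simp only [one_mul, div_one, ← rpow_natCast_mul hc.le] at h
    rw [h, show k / 2 - 1 / 2 = (k - 1) / 2 by ring,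
      show ((2 : ℕ) : ℝ) * (1 / 2 - k / 2) = 1 - k by push_cast; ring]
  have houter := integral_Ioi_add_mul_sq_rpow_neg hA one_half_pos (by linarith : 1 / 2 < k - 1)
  simp only [one_div_mul_eq_div, neg_sub] at houter
  have hsqrt : √(π / (1 / 2)) / 2 = √π / √2 := by
    rw [sqrt_div' _ one_half_pos.le, one_div, sqrt_inv]
    field_simp
    rw [sq_sqrt zero_le_two]
  simp_rw [hinner]
  rw [integral_const_mul, houter, hsqrt, show k - 1 - 1 / 2 = k - 3 / 2 by ring,
    show 1 / 2 - (k - 1) = 3 / 2 - k by ring,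
    show π / √2 = √π * √π / √2 by rw [mul_self_sqrt pi_pos.le]]
  ring
end
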